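/- Fix η > 0 and an integer M ≥ 1, and for ε > 0 set ε₁ = ε/η and P_o(ε) = (1 − e^{−ε})^M + Σ_{n=1}^{M} [ n · ∫₀^∞ e^{−y} · (1 − e^{−y})^{n−1} · (1 − e^{−ε₁/y})^M dy ] · C(M,n) · (1 − e^{−ε})^{M−n} · e^{−nε}. Then lim_{ε→0⁺} log P_o(ε) / log ε = M; that is, when a single user pair is scheduled (m = 1), the greedy user scheduling approach achieves the full diversity gain M. -/

import Mathlib

/-! The first term alone gives `P_o(ε) ≥ (1 - e^{-ε})^M ≥ (ε / e)^M`. In the other direction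
`1 - e^{-x} ≤ x` bounds the `n`-th summand by `O(ε₁^n log (1/ε₁) ε^{M-n})`, so that
`P_o(ε) = O(ε^M log (1/ε))`. As `log log (1/ε) = o(log ε)`, both bounds have diversity order `M`. -/

open Filter Topology Real MeasureTheory Set

section OneSubExpNeg

variable {x : ℝ}

lemma one_sub_exp_neg_le_self (x : ℝ) : 1 - exp (-x) ≤ x := by
  linarith [one_sub_le_exp_neg x]

lemma one_sub_exp_neg_nonneg (hx : 0 ≤ x) : 0 ≤ 1 - exp (-x) := by
  linarith [exp_le_one_iff.2 (neg_nonpos.2 hx)]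

lemma one_sub_exp_neg_le_one (x : ℝ) : 1 - exp (-x) ≤ 1 := by
  linarith [exp_pos (-x)]

lemma exp_neg_one_mul_le_one_sub_exp_neg (hx0 : 0 ≤ x) (hx1 : x ≤ 1) :
    exp (-1) * x ≤ 1 - exp (-x) := by
  have hxexp : x * exp (-x) ≤ 1 - exp (-x) := by
    have := mul_le_mul_of_nonneg_right (add_one_le_exp x) (exp_pos (-x)).le
    rw [add_mul, ← exp_add, add_neg_cancel, exp_zero, one_mul] at this
    linarith
  calc exp (-1) * x ≤ exp (-x) * x := by gcongr
    _ ≤ 1 - exp (-x) := by rw [mul_comm]; exact hxexp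

end OneSubExpNeg

/-- The integrand of the conditional outage probability, with `c` standing for `ε₁ = ε / η`. -/
noncomputable def greedyIntegrand (c : ℝ) (n M : ℕ) (y : ℝ) : ℝ :=
  exp (-y) * (1 - exp (-y)) ^ (n - 1) * (1 - exp (-(c / y))) ^ M

section GreedyIntegrand

variable {c y : ℝ} {n M : ℕ}

lemma greedyIntegrand_nonneg (hc : 0 ≤ c) (hy : 0 ≤ y) : 0 ≤ greedyIntegrand c n M y := by
  have := one_sub_exp_neg_nonneg hy
  have := one_sub_exp_neg_nonneg (div_nonneg hc hy)
  unfold greedyIntegrand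
  positivity

lemma greedyIntegrand_le_exp_neg (hc : 0 ≤ c) (hy : 0 ≤ y) :
    greedyIntegrand c n M y ≤ exp (-y) := by
  have h1 := one_sub_exp_neg_nonneg hy
  have h2 := one_sub_exp_neg_nonneg (div_nonneg hc hy)
  calc greedyIntegrand c n M y ≤ exp (-y) * 1 ^ (n - 1) * 1 ^ M := by
        unfold greedyIntegrand; gcongr <;> exact one_sub_exp_neg_le_one _
    _ = exp (-y) := by simp

lemma integrableOn_greedyIntegrand (hc : 0 ≤ c) :
    IntegrableOn (greedyIntegrand c n M) (Ioi 0) := by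
  refine (exp_neg_integrableOn_Ioi 0 one_pos).mono' ?_ ?_
  · exact (Measurable.aestronglyMeasurable (by unfold greedyIntegrand; fun_prop))
  · filter_upwards [self_mem_ae_restrict measurableSet_Ioi] with y hy
    rw [norm_of_nonneg (greedyIntegrand_nonneg hc hy.le)]
    simpa using greedyIntegrand_le_exp_neg hc hy.le

lemma integral_greedyIntegrand_nonneg (hc : 0 ≤ c) : 0 ≤ ∫ y in Ioi 0, greedyIntegrand c n M y :=
  setIntegral_nonneg measurableSet_Ioi fun _ hy => greedyIntegrand_nonneg hc (le_of_lt hy)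

lemma greedyIntegrand_le_of_le (hc : 0 ≤ c) (hy : 0 ≤ y) (hyc : y ≤ c) :
    greedyIntegrand c n M y ≤ c ^ (n - 1) := by
  have h1 := one_sub_exp_neg_nonneg hy
  have h2 := one_sub_exp_neg_nonneg (div_nonneg hc hy)
  calc greedyIntegrand c n M y ≤ 1 * c ^ (n - 1) * 1 ^ M := by
        unfold greedyIntegrand
        gcongr
        · exact exp_le_one_iff.2 (neg_nonpos.2 hy)
        · exact (one_sub_exp_neg_le_self y).trans hyc
        · exact one_sub_exp_neg_le_one _
    _ = c ^ (n - 1) := by simp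

lemma greedyIntegrand_le_of_ge (hn : 1 ≤ n) (hnM : n ≤ M) (hc : 0 ≤ c) (hy : 0 < y)
    (hcy : c ≤ y) : greedyIntegrand c n M y ≤ c ^ n * exp (-y) / y := by
  have h1 := one_sub_exp_neg_nonneg hy.le
  have h2 := one_sub_exp_neg_nonneg (div_nonneg hc hy.le)
  calc greedyIntegrand c n M y ≤ exp (-y) * y ^ (n - 1) * (c / y) ^ n := by
        unfold greedyIntegrand
        gcongr
        · exact one_sub_exp_neg_le_self y
        · calc (1 - exp (-(c / y))) ^ M ≤ (c / y) ^ M := by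
                gcongr; exact one_sub_exp_neg_le_self _
            _ ≤ (c / y) ^ n :=
                pow_le_pow_of_le_one (div_nonneg hc hy.le) ((div_le_one hy).2 hcy) hnM
    _ = c ^ n * exp (-y) / y := by
        obtain ⟨k, rfl⟩ : ∃ k, n = k + 1 := ⟨n - 1, by omega⟩
        rw [Nat.add_sub_cancel, div_pow, pow_succ y]
        field_simp

end GreedyIntegrand

lemma setIntegral_Ioi_eq_Ioc_add_Ioi {E : Type*} [NormedAddCommGroup E] [NormedSpace ℝ E]
    {μ : Measure ℝ} {f : ℝ → E} {a b : ℝ} (hab : a ≤ b) (hf : IntegrableOn f (Ioi a) μ) :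
    ∫ x in Ioi a, f x ∂μ = (∫ x in Ioc a b, f x ∂μ) + ∫ x in Ioi b, f x ∂μ := by
  rw [← Ioc_union_Ioi_eq_Ioi hab] at hf ⊢
  exact setIntegral_union (Ioc_disjoint_Ioi le_rfl) measurableSet_Ioi
    (hf.mono_set subset_union_left) (hf.mono_set subset_union_right)

/-- On `(0, c]`, `(c, 1]` and `(1, ∞)` the integrand is at most `c ^ (n - 1)`, `c ^ n / y` and
`c ^ n e^{-y}`, whose integrals are `c ^ n`, `-c ^ n log c` and at most `c ^ n`. -/
lemma integral_greedyIntegrand_le {c : ℝ} {n M : ℕ} (hn : 1 ≤ n) (hnM : n ≤ M) (hc0 : 0 < c)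
    (hc1 : c ≤ 1) : ∫ y in Ioi 0, greedyIntegrand c n M y ≤ c ^ n * (2 - log c) := by
  have hf := integrableOn_greedyIntegrand (n := n) (M := M) hc0.le
  have hsplit := setIntegral_Ioi_eq_Ioc_add_Ioi hc0.le hf
  rw [setIntegral_Ioi_eq_Ioc_add_Ioi hc1 (hf.mono_set (Ioi_subset_Ioi hc0.le))] at hsplit
  have hsmall : ∫ y in Ioc 0 c, greedyIntegrand c n M y ≤ c ^ n := by
    calc ∫ y in Ioc 0 c, greedyIntegrand c n M y ≤ ∫ _ in Ioc 0 c, c ^ (n - 1) :=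
          setIntegral_mono_on (hf.mono_set Ioc_subset_Ioi_self)
            (integrableOn_const measure_Ioc_lt_top.ne)
            measurableSet_Ioc fun y hy => greedyIntegrand_le_of_le hc0.le hy.1.le hy.2
      _ = c ^ n := by
        rw [setIntegral_const, measureReal_def, volume_Ioc, sub_zero, ENNReal.toReal_ofReal hc0.le,
          smul_eq_mul, ← pow_succ', Nat.sub_add_cancel hn]
  have hmiddle : ∫ y in Ioc c 1, greedyIntegrand c n M y ≤ c ^ n * -log c := by
    calc ∫ y in Ioc c 1, greedyIntegrand c n M y ≤ ∫ y in Ioc c 1, c ^ n * y⁻¹ := by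
          refine setIntegral_mono_on (hf.mono_set (Ioc_subset_Ioi_self.trans
            (Ioi_subset_Ioi hc0.le))) ?_ measurableSet_Ioc fun y hy => ?_
          · refine (ContinuousOn.integrableOn_Icc ?_).mono_set Ioc_subset_Icc_self
            exact continuousOn_const.mul (continuousOn_inv₀.mono fun y hy =>
              (hc0.trans_le hy.1).ne')
          · have hy0 : 0 < y := hc0.trans hy.1
            calc greedyIntegrand c n M y ≤ c ^ n * exp (-y) / y :=
                  greedyIntegrand_le_of_ge hn hnM hc0.le hy0 hy.1.le
              _ ≤ c ^ n * 1 / y := by gcongr; exact exp_le_one_iff.2 (by linarith)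
              _ = c ^ n * y⁻¹ := by ring
      _ = c ^ n * -log c := by
        rw [integral_const_mul, ← intervalIntegral.integral_of_le hc1,
          integral_inv_of_pos hc0 one_pos, one_div, log_inv]
  have hlarge : ∫ y in Ioi 1, greedyIntegrand c n M y ≤ c ^ n := by
    calc ∫ y in Ioi 1, greedyIntegrand c n M y ≤ ∫ y in Ioi 1, c ^ n * exp (-y) := by
          refine setIntegral_mono_on (hf.mono_set (Ioi_subset_Ioi zero_le_one)) ?_
            measurableSet_Ioi fun y (hy : 1 < y) => ?_
          · exact (by simpa using exp_neg_integrableOn_Ioi 1 one_pos :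
              IntegrableOn (fun y : ℝ => exp (-y)) (Ioi 1)).const_mul _
          · calc greedyIntegrand c n M y ≤ c ^ n * exp (-y) / y :=
                  greedyIntegrand_le_of_ge hn hnM hc0.le (by linarith) (by linarith)
              _ ≤ c ^ n * exp (-y) := div_le_self (by positivity) hy.le
      _ = c ^ n * exp (-1) := by rw [integral_const_mul, integral_exp_neg_Ioi]
      _ ≤ c ^ n := mul_le_of_le_one_right (by positivity) (exp_le_one_iff.2 (by norm_num))
  rw [hsplit]
  linarith

noncomputable def outageProb (η : ℝ) (M : ℕ) (ε : ℝ) : ℝ :=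
  (1 - exp (-ε)) ^ M + ∑ n ∈ Finset.Icc 1 M,
    ((n : ℝ) * ∫ y in Ioi 0, greedyIntegrand (ε / η) n M y) *
      (M.choose n : ℝ) * (1 - exp (-ε)) ^ (M - n) * exp (-(n : ℝ) * ε)

section OutageProb

variable {η ε : ℝ} {M : ℕ}

lemma exp_neg_one_pow_mul_pow_le_outageProb (hη : 0 ≤ η) (hε0 : 0 ≤ ε) (hε1 : ε ≤ 1) :
    exp (-1) ^ M * ε ^ M ≤ outageProb η M ε := by
  have h1 := one_sub_exp_neg_nonneg hε0
  have hsum : 0 ≤ ∑ n ∈ Finset.Icc 1 M,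
      ((n : ℝ) * ∫ y in Ioi 0, greedyIntegrand (ε / η) n M y) *
        (M.choose n : ℝ) * (1 - exp (-ε)) ^ (M - n) * exp (-(n : ℝ) * ε) := by
    refine Finset.sum_nonneg fun n _ => ?_
    have := integral_greedyIntegrand_nonneg (n := n) (M := M) (div_nonneg hε0 hη)
    positivity
  calc exp (-1) ^ M * ε ^ M = (exp (-1) * ε) ^ M := (mul_pow _ _ _).symm
    _ ≤ (1 - exp (-ε)) ^ M := by
        gcongr
        exact exp_neg_one_mul_le_one_sub_exp_neg hε0 hε1
    _ ≤ outageProb η M ε := le_add_of_nonneg_right hsum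

lemma outageProb_le (hη : 0 < η) (hε0 : 0 < ε) (hεη : ε ≤ η) :
    outageProb η M ε ≤ (1 + ∑ n ∈ Finset.Icc 1 M, (n : ℝ) * M.choose n * η⁻¹ ^ n) * ε ^ M *
      (2 + log η - log ε) := by
  set L := 2 + log η - log ε
  have hlog : log (ε / η) = log ε - log η := log_div hε0.ne' hη.ne'
  have hL : 1 ≤ L := by
    have := log_nonpos (div_pos hε0 hη).le ((div_le_one hη).2 hεη)
    linarith
  have h1 := one_sub_exp_neg_nonneg hε0.le
  have hterm : ∀ n ∈ Finset.Icc 1 M,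
      ((n : ℝ) * ∫ y in Ioi 0, greedyIntegrand (ε / η) n M y) *
          (M.choose n : ℝ) * (1 - exp (-ε)) ^ (M - n) * exp (-(n : ℝ) * ε) ≤
        (n : ℝ) * M.choose n * η⁻¹ ^ n * (ε ^ M * L) := by
    intro n hn
    obtain ⟨hn1, hnM⟩ := Finset.mem_Icc.1 hn
    have hI := integral_greedyIntegrand_le hn1 hnM (div_pos hε0 hη) ((div_le_one hη).2 hεη)
    have := integral_greedyIntegrand_nonneg (n := n) (M := M) (div_pos hε0 hη).le
    calc ((n : ℝ) * ∫ y in Ioi 0, greedyIntegrand (ε / η) n M y) *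
          (M.choose n : ℝ) * (1 - exp (-ε)) ^ (M - n) * exp (-(n : ℝ) * ε)
        ≤ ((n : ℝ) * ((ε / η) ^ n * (2 - log (ε / η)))) * M.choose n * ε ^ (M - n) * 1 := by
          have : 0 ≤ 2 - log (ε / η) := by linarith
          gcongr
          · exact one_sub_exp_neg_le_self ε
          · exact exp_le_one_iff.2 (by rw [neg_mul, neg_nonpos]; positivity)
      _ = (n : ℝ) * M.choose n * η⁻¹ ^ n * (ε ^ M * L) := by
          rw [hlog, ← pow_mul_pow_sub ε hnM, div_eq_mul_inv, mul_pow]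
          ring
  calc outageProb η M ε
      ≤ ε ^ M + ∑ n ∈ Finset.Icc 1 M, (n : ℝ) * M.choose n * η⁻¹ ^ n * (ε ^ M * L) := by
        unfold outageProb
        gcongr ?_ + ?_
        · exact pow_le_pow_left₀ h1 (one_sub_exp_neg_le_self ε) M
        · exact Finset.sum_le_sum hterm
    _ ≤ (1 + ∑ n ∈ Finset.Icc 1 M, (n : ℝ) * M.choose n * η⁻¹ ^ n) * ε ^ M * L := by
        rw [← Finset.sum_mul]
        have : 0 ≤ ∑ n ∈ Finset.Icc 1 M, (n : ℝ) * M.choose n * η⁻¹ ^ n := by positivity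
        nlinarith [pow_pos hε0 M]

end OutageProb

lemma tendsto_log_const_sub_div_atBot (C : ℝ) :
    Tendsto (fun t => log (C - t) / t) atBot (𝓝 0) := by
  have hCt : Tendsto (fun t : ℝ => C - t) atBot atTop :=
    tendsto_atTop_add_const_left _ C tendsto_neg_atBot_atTop
  have hlog : (fun t => log (C - t)) =o[atBot] fun t => C - t :=
    isLittleO_log_id_atTop.comp_tendsto hCt
  have hlin : (fun t : ℝ => C - t) =O[atBot] id :=
    (Asymptotics.isLittleO_const_id_atBot C).isBigO.sub (Asymptotics.isBigO_refl _ _)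
  exact (hlog.trans_isBigO hlin).tendsto_div_nhds_zero

theorem tendsto_log_div_log_of_le_of_le {f : ℝ → ℝ} {M : ℕ} {a b C : ℝ} (ha : 0 < a)
    (hb : 0 < b) (hlow : ∀ᶠ ε in 𝓝[>] 0, a * ε ^ M ≤ f ε)
    (hup : ∀ᶠ ε in 𝓝[>] 0, f ε ≤ b * ε ^ M * (C - log ε)) :
    Tendsto (fun ε => log (f ε) / log ε) (𝓝[>] 0) (𝓝 M) := by
  have hlog := tendsto_log_nhdsGT_zero
  have hC : ∀ᶠ ε in 𝓝[>] (0 : ℝ), 0 < C - log ε :=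
    (hlog.eventually (eventually_lt_atBot C)).mono fun ε h => by linarith
  have hlower : Tendsto (fun ε => M + (log b / log ε + log (C - log ε) / log ε))
      (𝓝[>] 0) (𝓝 M) := by
    simpa using tendsto_const_nhds.add ((tendsto_const_nhds.div_atBot hlog).add
      ((tendsto_log_const_sub_div_atBot C).comp hlog))
  have hupper : Tendsto (fun ε => M + log a / log ε) (𝓝[>] 0) (𝓝 M) := by
    simpa using tendsto_const_nhds.add (tendsto_const_nhds.div_atBot hlog)
  refine tendsto_of_tendsto_of_tendsto_of_le_of_le' hlower hupper ?_ ?_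
  all_goals
    filter_upwards [hlow, hup, hC, Ioo_mem_nhdsGT one_pos] with ε hεlow hεup hεC hε
    have hlogε : log ε < 0 := log_neg hε.1 hε.2
    have hεM : 0 < ε ^ M := pow_pos hε.1 M
    have hf : 0 < f ε := (mul_pos ha hεM).trans_le hεlow
  · have := log_le_log hf hεup
    rw [log_mul (mul_pos hb hεM).ne' hεC.ne', log_mul hb.ne' hεM.ne', log_pow] at this
    rw [le_div_iff_of_neg hlogε, add_mul, add_mul, div_mul_cancel₀ _ hlogε.ne,
      div_mul_cancel₀ _ hlogε.ne]
    linarith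
  · have := log_le_log (mul_pos ha hεM) hεlow
    rw [log_mul ha.ne' hεM.ne', log_pow] at this
    rw [div_le_iff_of_neg hlogε, add_mul, div_mul_cancel₀ _ hlogε.ne]
    linarith

theorem stmt17_general (η : ℝ) (hη : 0 < η) (M : ℕ) :
    Tendsto
      (fun ε : ℝ =>
        Real.log
            ((1 - Real.exp (-ε)) ^ M +
              ∑ n ∈ Finset.Icc 1 M,
                ((n : ℝ) *
                    ∫ y in Set.Ioi (0 : ℝ),
                      Real.exp (-y) * (1 - Real.exp (-y)) ^ (n - 1) *
                        (1 - Real.exp (-((ε / η) / y))) ^ M) *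
                  (M.choose n : ℝ) * (1 - Real.exp (-ε)) ^ (M - n) * Real.exp (-(n : ℝ) * ε))
          / Real.log ε)
      (𝓝[>] 0) (𝓝 M) := by
  change Tendsto (fun ε => log (outageProb η M ε) / log ε) (𝓝[>] 0) (𝓝 M)
  have hlow : ∀ᶠ ε in 𝓝[>] 0, exp (-1) ^ M * ε ^ M ≤ outageProb η M ε := by
    filter_upwards [Ioc_mem_nhdsGT one_pos] with ε hε
    exact exp_neg_one_pow_mul_pow_le_outageProb hη.le hε.1.le hε.2
  have hup : ∀ᶠ ε in 𝓝[>] 0, outageProb η M ε ≤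
      (1 + ∑ n ∈ Finset.Icc 1 M, (n : ℝ) * M.choose n * η⁻¹ ^ n) * ε ^ M *
        (2 + log η - log ε) := by
    filter_upwards [Ioc_mem_nhdsGT hη] with ε hε
    exact outageProb_le hη hε.1 hε.2
  exact tendsto_log_div_log_of_le_of_le (by positivity) (by positivity) hlow hup

/-- Fix `η > 0` and `M ≥ 1`. With `ε₁ = ε/η` and
`P_o(ε) = (1 − e^{−ε})^M + Σ_{n=1}^{M} [ n ∫₀^∞ e^{−y} (1 − e^{−y})^{n−1} (1 − e^{−ε₁/y})^M dy ]
  · C(M,n) (1 − e^{−ε})^{M−n} e^{−nε}`,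
we have `lim_{ε→0⁺} log P_o(ε)/log ε = M`: when a single user pair is scheduled, the greedy
user scheduling approach achieves the full diversity gain `M`. -/
theorem stmt17 (η : ℝ) (hη : 0 < η) (M : ℕ) (hM : 1 ≤ M) :
    Tendsto
      (fun ε : ℝ =>
        Real.log
            ((1 - Real.exp (-ε)) ^ M +
              ∑ n ∈ Finset.Icc 1 M,
                ((n : ℝ) *
                    ∫ y in Set.Ioi (0 : ℝ),
                      Real.exp (-y) * (1 - Real.exp (-y)) ^ (n - 1) *
                        (1 - Real.exp (-((ε / η) / y))) ^ M) *
                  (M.choose n : ℝ) * (1 - Real.exp (-ε)) ^ (M - n) * Real.exp (-(n : ℝ) * ε))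
          / Real.log ε)
      (𝓝[>] 0) (𝓝 M) :=
  stmt17_general η hη M
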